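/- arXiv:1712.08184 — 5 statements merged into one kernel-verified Lean document; each statement's English description precedes it below -/
import Mathlib

section
/- Let S be a metrizable topological space, let f : S → ℝ be bounded and continuous, and let g, g_N : S → ℝ (N ∈ ℕ) be bounded continuous functions with sup_{y ∈ S} |g_N(y) − g(y)| → 0 as N → ∞. Let (Q_N) be a sequence of Borel probability measures on the path space P(S) converging weakly to a Borel probability measure Q. Assume that for every N, every 0 ≤ a ≤ b, and every bounded continuous function φ : P(S) → ℝ that is measurable with respect to σ_a, one has ∫ (f(γ(b)) − ∫_a^b g_N(γ(s)) ds) φ(γ) dQ_N(γ) = ∫ f(γ(a)) φ(γ) dQ_N(γ). Then for every 0 ≤ a ≤ b and every bounded continuous σ_a-measurable φ : P(S) → ℝ, it holds that ∫ (f(γ(b)) − ∫_a^b g(γ(s)) ds) φ(γ) dQ(γ) = ∫ f(γ(a)) φ(γ) dQ(γ). (In other words, the martingale-problem property for the operators g_N passes to the weak limit with limit operator g.) -/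
open MeasureTheory Filter
open scoped NNReal Topology BoundedContinuousFunction

/-!
Both sides of the identity are integrals of bounded continuous functionals of the path. The
functional `γ ↦ (f (γ b) - ∫_a^b h (γ s) ds) * φ γ` depends continuously, in sup norm, on `h`,
since `h ↦ ∫_a^b h (γ ·)` is a bounded linear operator of norm at most `b - a`. Under probability
measures the integral is 1-Lipschitz in sup norm, so the left-hand sides for `g_N` under `Q_N`
converge to the left-hand side for `g` under `Q` by weak convergence, while the right-hand sides
converge by weak convergence directly.
-/

/-- The σ-algebra on path space `C(ℝ≥0, S)` generated by the evaluation maps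
`γ ↦ γ s` for `0 ≤ s ≤ a`. -/
def evalSigma (S : Type*) [TopologicalSpace S] [MeasurableSpace S] (a : ℝ≥0) :
    MeasurableSpace C(ℝ≥0, S) :=
  ⨆ s ∈ Set.Iic a, MeasurableSpace.comap (fun γ : C(ℝ≥0, S) => γ s) inferInstance

section PathSpace

variable {S E : Type*} [TopologicalSpace S] [NormedAddCommGroup E] [NormedSpace ℝ E]

lemma continuous_intervalIntegral_comp_path {h : S → E} (hh : Continuous h) (a b : ℝ) :
    Continuous fun γ : C(ℝ≥0, S) => ∫ s in a..b, h (γ s.toNNReal) :=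
  intervalIntegral.continuous_parametric_intervalIntegral_of_continuous' (by fun_prop) a b

omit [NormedSpace ℝ E] in
lemma intervalIntegrable_comp_path {h : S → E} (hh : Continuous h) (γ : C(ℝ≥0, S)) (a b : ℝ) :
    IntervalIntegrable (fun s : ℝ => h (γ s.toNNReal)) volume a b :=
  (hh.comp (γ.continuous.comp continuous_real_toNNReal)).intervalIntegrable a b

lemma norm_intervalIntegral_comp_path_le (h : S →ᵇ E) (γ : C(ℝ≥0, S)) (a b : ℝ) :
    ‖∫ s in a..b, h (γ s.toNNReal)‖ ≤ ‖h‖ * |b - a| :=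
  intervalIntegral.norm_integral_le_of_norm_le_const fun _ _ => h.norm_coe_le_norm _

noncomputable def pathIntervalIntegral (a b : ℝ) : (S →ᵇ E) →L[ℝ] (C(ℝ≥0, S) →ᵇ E) :=
  LinearMap.mkContinuous
    { toFun h := .ofNormedAddCommGroup (fun γ => ∫ s in a..b, h (γ s.toNNReal))
        (continuous_intervalIntegral_comp_path h.continuous a b) (‖h‖ * |b - a|)
        (fun γ => norm_intervalIntegral_comp_path_le h γ a b)
      map_add' h h' := by
        ext γ
        exact intervalIntegral.integral_add (intervalIntegrable_comp_path h.continuous γ a b)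
          (intervalIntegrable_comp_path h'.continuous γ a b)
      map_smul' c h := by
        ext γ
        exact intervalIntegral.integral_smul c _ }
    |b - a| fun h => by
      rw [mul_comm]
      exact BoundedContinuousFunction.norm_ofNormedAddCommGroup_le _ (by positivity)
        (norm_intervalIntegral_comp_path_le h · a b)

def pathEval (t : ℝ≥0) : C(C(ℝ≥0, S), S) := ⟨fun γ => γ t, continuous_eval_const t⟩

end PathSpace

lemma tendsto_integral_of_tendsto_of_tendsto_integral
    {ι X : Type*} {l : Filter ι} [TopologicalSpace X] [MeasurableSpace X] [OpensMeasurableSpace X]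
    {μ : ι → Measure X} [∀ i, IsProbabilityMeasure (μ i)] {ν : Measure X}
    {F : ι → X →ᵇ ℝ} {F₀ : X →ᵇ ℝ} (hF : Tendsto F l (𝓝 F₀))
    (hμ : Tendsto (fun i => ∫ x, F₀ x ∂(μ i)) l (𝓝 (∫ x, F₀ x ∂ν))) :
    Tendsto (fun i => ∫ x, F i x ∂(μ i)) l (𝓝 (∫ x, F₀ x ∂ν)) := by
  have hsmall : Tendsto (fun i => ∫ x, F i x ∂(μ i) - ∫ x, F₀ x ∂(μ i)) l (𝓝 0) := by
    refine squeeze_zero_norm (fun i => ?_) (tendsto_iff_norm_sub_tendsto_zero.1 hF)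
    rw [← integral_sub ((F i).integrable _) (F₀.integrable _)]
    exact (F i - F₀).norm_integral_le_norm (μ i)
  simpa using hsmall.add hμ

theorem martingale_problem_passes_to_weak_limit_general
    {S : Type*} [TopologicalSpace S] [MeasurableSpace S]
    [MeasurableSpace C(ℝ≥0, S)] [BorelSpace C(ℝ≥0, S)]
    (f g : S →ᵇ ℝ) (gN : ℕ → (S →ᵇ ℝ))
    (hg : Tendsto (fun N => ‖gN N - g‖) atTop (𝓝 0))
    (Q : ℕ → Measure C(ℝ≥0, S)) (Qlim : Measure C(ℝ≥0, S))
    (hQ : ∀ N, IsProbabilityMeasure (Q N))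
    (hweak : ∀ φ : C(ℝ≥0, S) →ᵇ ℝ,
      Tendsto (fun N => ∫ γ, φ γ ∂(Q N)) atTop (𝓝 (∫ γ, φ γ ∂Qlim)))
    (hmart : ∀ N : ℕ, ∀ a b : ℝ≥0, a ≤ b →
      ∀ φ : C(ℝ≥0, S) →ᵇ ℝ, Measurable[evalSigma S a] (φ : C(ℝ≥0, S) → ℝ) →
        ∫ γ, (f (γ b) - ∫ s in (a : ℝ)..(b : ℝ), gN N (γ s.toNNReal)) * φ γ ∂(Q N)
          = ∫ γ, f (γ a) * φ γ ∂(Q N)) :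
    ∀ a b : ℝ≥0, a ≤ b →
      ∀ φ : C(ℝ≥0, S) →ᵇ ℝ, Measurable[evalSigma S a] (φ : C(ℝ≥0, S) → ℝ) →
        ∫ γ, (f (γ b) - ∫ s in (a : ℝ)..(b : ℝ), g (γ s.toNNReal)) * φ γ ∂Qlim
          = ∫ γ, f (γ a) * φ γ ∂Qlim := by
  intro a b hab φ hφ
  let F (h : S →ᵇ ℝ) : C(ℝ≥0, S) →ᵇ ℝ :=
    (f.compContinuous (pathEval b) - pathIntervalIntegral a b h) * φ
  have hF : Tendsto (fun N => F (gN N)) atTop (𝓝 (F g)) :=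
    (tendsto_const_nhds.sub ((pathIntervalIntegral (a : ℝ) b).continuous.tendsto g |>.comp
      (tendsto_iff_norm_sub_tendsto_zero.2 hg))).mul tendsto_const_nhds
  have hlim := tendsto_integral_of_tendsto_of_tendsto_integral hF (hweak (F g))
  let G : C(ℝ≥0, S) →ᵇ ℝ := f.compContinuous (pathEval a) * φ
  have hG := (hweak G).congr fun N => (hmart N a b hab φ hφ).symm
  exact tendsto_nhds_unique hlim hG

/-- the martingale-problem property passes to the weak limit. -/
theorem martingale_problem_passes_to_weak_limit
    {S : Type*} [TopologicalSpace S] [TopologicalSpace.MetrizableSpace S]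
    [MeasurableSpace S] [BorelSpace S]
    [MeasurableSpace C(ℝ≥0, S)] [BorelSpace C(ℝ≥0, S)]
    (f g : S →ᵇ ℝ) (gN : ℕ → (S →ᵇ ℝ))
    (hg : Tendsto (fun N => ‖gN N - g‖) atTop (𝓝 0))
    (Q : ℕ → Measure C(ℝ≥0, S)) (Qlim : Measure C(ℝ≥0, S))
    (hQ : ∀ N, IsProbabilityMeasure (Q N)) (hQlim : IsProbabilityMeasure Qlim)
    (hweak : ∀ φ : C(ℝ≥0, S) →ᵇ ℝ,
      Tendsto (fun N => ∫ γ, φ γ ∂(Q N)) atTop (𝓝 (∫ γ, φ γ ∂Qlim)))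
    (hmart : ∀ N : ℕ, ∀ a b : ℝ≥0, a ≤ b →
      ∀ φ : C(ℝ≥0, S) →ᵇ ℝ, Measurable[evalSigma S a] (φ : C(ℝ≥0, S) → ℝ) →
        ∫ γ, (f (γ b) - ∫ s in (a : ℝ)..(b : ℝ), gN N (γ s.toNNReal)) * φ γ ∂(Q N)
          = ∫ γ, f (γ a) * φ γ ∂(Q N)) :
    ∀ a b : ℝ≥0, a ≤ b →
      ∀ φ : C(ℝ≥0, S) →ᵇ ℝ, Measurable[evalSigma S a] (φ : C(ℝ≥0, S) → ℝ) →
        ∫ γ, (f (γ b) - ∫ s in (a : ℝ)..(b : ℝ), g (γ s.toNNReal)) * φ γ ∂Qlim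
          = ∫ γ, f (γ a) * φ γ ∂Qlim :=
  martingale_problem_passes_to_weak_limit_general f g gN hg Q Qlim hQ hweak hmart
end

section
/- Let M be a metrizable topological space, T > 0, and let Q be a Borel probability measure on the path space P(M × ℝ). For γ ∈ P(M × ℝ) and s ≥ 0, write τ_s(γ) for the second (real) component of γ(s). Assume: (i) Q({γ : τ_0(γ) = T}) = 1; (ii) Q({γ : τ_s(γ) ∈ [0, T] for all s ∈ [0, T]}) = 1; (iii) for all 0 ≤ a ≤ b ≤ T and all L ∈ σ_a, ∫_L (τ_b + b) dQ = ∫_L (τ_a + a) dQ and ∫_L (τ_b² + 2∫_0^b τ_r dr) dQ = ∫_L (τ_a² + 2∫_0^a τ_r dr) dQ. Then Q({γ : τ_s(γ) = T − s for all s ∈ [0, T]}) = 1; that is, Q concentrates on space-time curves that move backwards in time with unit speed. -/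
open MeasureTheory Filter
open scoped NNReal Topology

/-!
Write `τ_t` for the time coordinate of a path. Taking `L` to be the whole space and `a = 0` in
the two identities gives `E τ_b = T - b` and, exchanging expectation and time integral,
`E τ_b² = T² - 2 ∫₀ᵇ (T - r) dr = (T - b)²`. Hence `τ_b` has variance zero and equals `T - b`
almost surely for each fixed `b ≤ T`. Since paths are continuous, the exceptional null sets
only have to be collected over a countable dense set of times.
-/

open ProbabilityTheory Set Function TopologicalSpace
open scoped Interval

theorem ContinuousMap.isClosed_setOf_forall_imp {X Y : Type*} [TopologicalSpace X]
    [TopologicalSpace Y] {p : X → Prop} {q : X → Y → Prop}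
    (hq : ∀ x, p x → IsClosed {y | q x y}) :
    IsClosed {f : C(X, Y) | ∀ x, p x → q x (f x)} := by
  simp only [ofPred_forall]
  exact isClosed_iInter fun x => isClosed_iInter fun hx =>
    (hq x hx).preimage (continuous_eval_const x)

section

variable {Ω : Type*} [MeasurableSpace Ω] {μ : Measure Ω}

theorem ae_eq_of_integral_eq_of_integral_sq_eq [IsProbabilityMeasure μ] {X : Ω → ℝ} {c : ℝ}
    (hX : MemLp X 2 μ) (h1 : ∫ ω, X ω ∂μ = c) (h2 : ∫ ω, X ω ^ 2 ∂μ = c ^ 2) :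
    ∀ᵐ ω ∂μ, X ω = c := by
  have hvar : variance X μ = 0 := by
    rw [variance_eq_sub hX]
    simp only [Pi.pow_apply, h1, h2, sub_self]
  simpa only [h1] using ae_eq_integral_of_variance_eq_zero hX hvar

theorem ae_forall_mem_eq_of_forall_mem_ae_eq {I E : Type*} [TopologicalSpace I]
    [PseudoMetrizableSpace I] [TopologicalSpace E] [T2Space E] {X Y : I → Ω → E} {S : Set I}
    (hS : IsSeparable S) (hX : ∀ ω, Continuous fun t => X t ω)
    (hY : ∀ ω, Continuous fun t => Y t ω) (h : ∀ t ∈ S, X t =ᵐ[μ] Y t) :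
    ∀ᵐ ω ∂μ, ∀ t ∈ S, X t ω = Y t ω := by
  obtain ⟨D, hDS, hD, hSD⟩ := hS.exists_countable_dense_subset
  filter_upwards [(ae_ball_iff hD).2 fun t ht => h t (hDS ht)] with ω hω
  exact fun t ht => closure_minimal hω (isClosed_eq (hX ω) (hY ω)) (hSD ht)

theorem integrable_uncurry_of_ae_abs_le [IsFiniteMeasure μ] {X : ℝ → Ω → ℝ}
    (hXc : ∀ ω, Continuous fun r => X r ω) (hXm : ∀ r, Measurable (X r)) {a b C : ℝ}
    (hbound : ∀ᵐ ω ∂μ, ∀ r ∈ Ι a b, |X r ω| ≤ C) :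
    Integrable (uncurry X) ((volume.restrict (Ι a b)).prod μ) := by
  have : IsFiniteMeasure (volume.restrict (Ι a b)) := Real.isFiniteMeasure_restrict_Ioc _ _
  refine .of_bound
    (measurable_uncurry_of_continuous_of_measurable hXc hXm).aestronglyMeasurable C ?_
  filter_upwards [Measure.quasiMeasurePreserving_fst.ae (ae_restrict_mem measurableSet_uIoc),
    Measure.quasiMeasurePreserving_snd.ae hbound] with p hr hω
  exact hω p.1 hr

theorem integrable_intervalIntegral_of_ae_abs_le [IsFiniteMeasure μ] {X : ℝ → Ω → ℝ}
    (hXc : ∀ ω, Continuous fun r => X r ω) (hXm : ∀ r, Measurable (X r)) {a b C : ℝ}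
    (hbound : ∀ᵐ ω ∂μ, ∀ r ∈ Ι a b, |X r ω| ≤ C) :
    Integrable (fun ω => ∫ r in a..b, X r ω) μ := by
  simp_rw [intervalIntegral.intervalIntegral_eq_integral_uIoc]
  exact (integrable_uncurry_of_ae_abs_le hXc hXm hbound).integral_prod_right.smul
    (if a ≤ b then 1 else -1 : ℝ)

theorem integral_intervalIntegral_comm_of_ae_abs_le [IsFiniteMeasure μ] {X : ℝ → Ω → ℝ}
    (hXc : ∀ ω, Continuous fun r => X r ω) (hXm : ∀ r, Measurable (X r)) {a b C : ℝ}
    (hbound : ∀ᵐ ω ∂μ, ∀ r ∈ Ι a b, |X r ω| ≤ C) :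
    ∫ ω, (∫ r in a..b, X r ω) ∂μ = ∫ r in a..b, ∫ ω, X r ω ∂μ :=
  (intervalIntegral_integral_swap (integrable_uncurry_of_ae_abs_le hXc hXm hbound)).symm

theorem ae_forall_eq_sub_of_moment_identities [IsProbabilityMeasure μ] {X : ℝ≥0 → Ω → ℝ}
    (hXc : ∀ ω, Continuous fun t => X t ω) (hXm : ∀ t, Measurable (X t)) {T : ℝ}
    (hX0 : ∀ᵐ ω ∂μ, X 0 ω = T)
    (hbound : ∀ᵐ ω ∂μ, ∀ t : ℝ≥0, (t : ℝ) ≤ T → X t ω ∈ Icc 0 T)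
    (hmean : ∀ b : ℝ≥0, (b : ℝ) ≤ T → ∫ ω, (X b ω + b) ∂μ = ∫ ω, X 0 ω ∂μ)
    (hsq : ∀ b : ℝ≥0, (b : ℝ) ≤ T →
      ∫ ω, (X b ω ^ 2 + 2 * ∫ r in (0 : ℝ)..b, X r.toNNReal ω) ∂μ = ∫ ω, X 0 ω ^ 2 ∂μ) :
    ∀ᵐ ω ∂μ, ∀ t : ℝ≥0, (t : ℝ) ≤ T → X t ω = T - t := by
  have habs : ∀ᵐ ω ∂μ, ∀ t : ℝ≥0, (t : ℝ) ≤ T → |X t ω| ≤ T := by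
    filter_upwards [hbound] with ω h t ht using (abs_of_nonneg (h t ht).1).trans_le (h t ht).2
  have hmemLp (t : ℝ≥0) (ht : (t : ℝ) ≤ T) : MemLp (X t) 2 μ :=
    .of_bound (hXm t).aestronglyMeasurable T (by filter_upwards [habs] with ω h using h t ht)
  have hXc' (ω : Ω) : Continuous fun r : ℝ => X r.toNNReal ω :=
    (hXc ω).comp continuous_real_toNNReal
  have habs' (b : ℝ≥0) (hb : (b : ℝ) ≤ T) :
      ∀ᵐ ω ∂μ, ∀ r ∈ Ι 0 (b : ℝ), |X r.toNNReal ω| ≤ T := by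
    filter_upwards [habs] with ω h r hr
    rw [uIoc_of_le b.coe_nonneg] at hr
    exact h _ (by rw [Real.coe_toNNReal _ hr.1.le]; exact hr.2.trans hb)
  have hfirst (t : ℝ≥0) (ht : (t : ℝ) ≤ T) : ∫ ω, X t ω ∂μ = T - t := by
    have h := hmean t ht
    rw [integral_add ((hmemLp t ht).integrable one_le_two) (integrable_const _),
      integral_congr_ae hX0] at h
    simp only [integral_const, probReal_univ, smul_eq_mul, one_mul] at h
    linarith
  have hrunning (b : ℝ≥0) (hb : (b : ℝ) ≤ T) :
      ∫ ω, (∫ r in (0 : ℝ)..b, X r.toNNReal ω) ∂μ = T * b - b ^ 2 / 2 := by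
    rw [integral_intervalIntegral_comm_of_ae_abs_le hXc' (fun r => hXm _) (habs' b hb),
      intervalIntegral.integral_congr (g := fun r => T - r) fun r hr => ?_]
    · rw [intervalIntegral.integral_sub intervalIntegrable_const
        intervalIntegral.intervalIntegrable_id, intervalIntegral.integral_const, integral_id]
      simp only [smul_eq_mul]
      ring
    · rw [uIcc_of_le b.coe_nonneg] at hr
      have hr' : (r.toNNReal : ℝ) = r := Real.coe_toNNReal _ hr.1
      rw [hfirst _ (hr'.trans_le (hr.2.trans hb)), hr']
  have hX0sq : ∫ ω, X 0 ω ^ 2 ∂μ = T ^ 2 :=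
    (integral_congr_ae (hX0.mono fun ω h => congrArg (· ^ 2) h)).trans (by simp)
  have hsecond (t : ℝ≥0) (ht : (t : ℝ) ≤ T) : ∫ ω, X t ω ^ 2 ∂μ = (T - t) ^ 2 := by
    have h := hsq t ht
    rw [integral_add (hmemLp t ht).integrable_sq
      ((integrable_intervalIntegral_of_ae_abs_le hXc' (fun r => hXm _) (habs' t ht)).const_mul 2),
      integral_const_mul, hrunning t ht, hX0sq] at h
    linarith
  exact ae_forall_mem_eq_of_forall_mem_ae_eq (S := {t : ℝ≥0 | (t : ℝ) ≤ T})
    (.of_separableSpace _) hXc (fun _ => by fun_prop) fun t ht =>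
      ae_eq_of_integral_eq_of_integral_sq_eq (hmemLp t ht) (hfirst t ht) (hsecond t ht)

end

theorem concentration_on_backwards_unit_speed_curves_general
    {M : Type*} [TopologicalSpace M]
    [MeasurableSpace M]
    [MeasurableSpace C(ℝ≥0, M × ℝ)] [BorelSpace C(ℝ≥0, M × ℝ)]
    (T : ℝ)
    (Q : Measure C(ℝ≥0, M × ℝ)) (hQ : IsProbabilityMeasure Q)
    (h0 : Q {γ : C(ℝ≥0, M × ℝ) | (γ 0).2 = T} = 1)
    (hrange : Q {γ : C(ℝ≥0, M × ℝ) | ∀ s : ℝ≥0, (s : ℝ) ≤ T → (γ s).2 ∈ Set.Icc 0 T} = 1)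
    (hmart1 : ∀ a b : ℝ≥0, a ≤ b → (b : ℝ) ≤ T →
      ∀ L : Set C(ℝ≥0, M × ℝ), MeasurableSet[evalSigma (M × ℝ) a] L →
        ∫ γ in L, ((γ b).2 + (b : ℝ)) ∂Q = ∫ γ in L, ((γ a).2 + (a : ℝ)) ∂Q)
    (hmart2 : ∀ a b : ℝ≥0, a ≤ b → (b : ℝ) ≤ T →
      ∀ L : Set C(ℝ≥0, M × ℝ), MeasurableSet[evalSigma (M × ℝ) a] L →
        ∫ γ in L, ((γ b).2 ^ 2 + 2 * ∫ r in (0 : ℝ)..(b : ℝ), (γ r.toNNReal).2) ∂Q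
          = ∫ γ in L, ((γ a).2 ^ 2 + 2 * ∫ r in (0 : ℝ)..(a : ℝ), (γ r.toNNReal).2) ∂Q) :
    Q {γ : C(ℝ≥0, M × ℝ) | ∀ s : ℝ≥0, (s : ℝ) ≤ T → (γ s).2 = T - s} = 1 := by
  have hτm (s : ℝ≥0) : Measurable fun γ : C(ℝ≥0, M × ℝ) => (γ s).2 :=
    (continuous_snd.comp (continuous_eval_const s)).measurable
  have hstart : ∀ᵐ γ ∂Q, (γ 0).2 = T :=
    (mem_ae_iff_prob_eq_one (hτm 0 (measurableSet_singleton T))).2 h0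
  have hbound : ∀ᵐ γ ∂Q, ∀ s : ℝ≥0, (s : ℝ) ≤ T → (γ s).2 ∈ Icc 0 T :=
    (mem_ae_iff_prob_eq_one (ContinuousMap.isClosed_setOf_forall_imp
      (q := fun (_ : ℝ≥0) (y : M × ℝ) => y.2 ∈ Icc 0 T)
      fun _ _ => isClosed_Icc.preimage continuous_snd).measurableSet).2 hrange
  refine (mem_ae_iff_prob_eq_one (ContinuousMap.isClosed_setOf_forall_imp
    (q := fun (s : ℝ≥0) (y : M × ℝ) => y.2 = T - s)
    fun _ _ => isClosed_singleton.preimage continuous_snd).measurableSet).1 ?_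
  exact ae_forall_eq_sub_of_moment_identities (fun γ => continuous_snd.comp γ.continuous) hτm
    hstart hbound (fun b hb => by simpa using hmart1 0 b zero_le hb univ .univ)
    (fun b hb => by simpa using hmart2 0 b zero_le hb univ .univ)

/-- a measure on path space over space-time `M × ℝ` satisfying the stated
martingale identities for the time component concentrates on space-time curves that move
backwards in time with unit speed. -/
theorem concentration_on_backwards_unit_speed_curves
    {M : Type*} [TopologicalSpace M] [TopologicalSpace.MetrizableSpace M]
    [MeasurableSpace M] [BorelSpace M]
    [MeasurableSpace C(ℝ≥0, M × ℝ)] [BorelSpace C(ℝ≥0, M × ℝ)]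
    (T : ℝ) (hT : 0 < T)
    (Q : Measure C(ℝ≥0, M × ℝ)) (hQ : IsProbabilityMeasure Q)
    (h0 : Q {γ : C(ℝ≥0, M × ℝ) | (γ 0).2 = T} = 1)
    (hrange : Q {γ : C(ℝ≥0, M × ℝ) | ∀ s : ℝ≥0, (s : ℝ) ≤ T → (γ s).2 ∈ Set.Icc 0 T} = 1)
    (hmart1 : ∀ a b : ℝ≥0, a ≤ b → (b : ℝ) ≤ T →
      ∀ L : Set C(ℝ≥0, M × ℝ), MeasurableSet[evalSigma (M × ℝ) a] L →
        ∫ γ in L, ((γ b).2 + (b : ℝ)) ∂Q = ∫ γ in L, ((γ a).2 + (a : ℝ)) ∂Q)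
    (hmart2 : ∀ a b : ℝ≥0, a ≤ b → (b : ℝ) ≤ T →
      ∀ L : Set C(ℝ≥0, M × ℝ), MeasurableSet[evalSigma (M × ℝ) a] L →
        ∫ γ in L, ((γ b).2 ^ 2 + 2 * ∫ r in (0 : ℝ)..(b : ℝ), (γ r.toNNReal).2) ∂Q
          = ∫ γ in L, ((γ a).2 ^ 2 + 2 * ∫ r in (0 : ℝ)..(a : ℝ), (γ r.toNNReal).2) ∂Q) :
    Q {γ : C(ℝ≥0, M × ℝ) | ∀ s : ℝ≥0, (s : ℝ) ≤ T → (γ s).2 = T - s} = 1 :=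
  concentration_on_backwards_unit_speed_curves_general T Q hQ h0 hrange hmart1 hmart2
end

section
/- Let (Ω, F, (F_s)_{s ∈ [0,T]}, Q) be a filtered probability space, let T > 0 and M ≥ 0, and let α : [0,T] × Ω → ℝ be a jointly measurable process, adapted to (F_s), with |α_s(ω)| ≤ M for all (s, ω). Assume: (i) α_0 = T almost surely; (ii) the process s ↦ α_s + s is a martingale with respect to (F_s) and Q; (iii) the process s ↦ α_s² + 2∫_0^s α_r dr is a martingale with respect to (F_s) and Q. Then for every s ∈ [0, T], α_s = T − s almost surely. -/
open MeasureTheory ProbabilityTheory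

/-!
Take expectations in the two martingale identities between times `0` and `s`. The first
gives `E[α_s] = T - s`; by Fubini, `E[∫_0^s α_r dr] = ∫_0^s (T - r) dr`, so the second gives
`E[α_s²] = T² - 2 (sT - s²/2) = (T - s)²`. Hence `Var[α_s] = 0`, i.e. `α_s = E[α_s]` a.s.
-/

theorem ae_eq_integral_of_integral_sq_eq_sq_integral {Ω : Type*} [MeasurableSpace Ω]
    {μ : Measure Ω} [IsProbabilityMeasure μ] {X : Ω → ℝ} (hX : MemLp X 2 μ)
    (h : ∫ ω, X ω ^ 2 ∂μ = (∫ ω, X ω ∂μ) ^ 2) : ∀ᵐ ω ∂μ, X ω = ∫ ω, X ω ∂μ :=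
  ae_eq_integral_of_variance_eq_zero hX <| by
    rw [variance_eq_sub hX]
    exact sub_eq_zero.mpr h

theorem intervalIntegral_const_sub_id (c a b : ℝ) :
    ∫ x in a..b, (c - x) = (b - a) * c - (b ^ 2 - a ^ 2) / 2 := by
  rw [intervalIntegral.integral_sub intervalIntegrable_const
    intervalIntegral.intervalIntegrable_id, integral_id, intervalIntegral.integral_const,
    smul_eq_mul]

section BoundedProcess

variable {Ω : Type*} [MeasurableSpace Ω] {μ : Measure Ω} [IsFiniteMeasure μ]
  {f : ℝ → Ω → ℝ} {a b M : ℝ}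

theorem integrable_uncurry_restrict_uIoc_prod (hf : Measurable (Function.uncurry f))
    (hM : ∀ r ∈ Set.uIoc a b, ∀ ω, |f r ω| ≤ M) :
    Integrable (Function.uncurry f) ((volume.restrict (Set.uIoc a b)).prod μ) := by
  have : IsFiniteMeasure (volume.restrict (Set.uIoc a b)) :=
    isFiniteMeasure_restrict.mpr measure_Ioc_lt_top.ne
  refine .of_bound hf.aestronglyMeasurable M ?_
  filter_upwards [Measure.quasiMeasurePreserving_fst.ae (ae_restrict_mem measurableSet_uIoc)]
    with p hp
  exact hM p.1 hp p.2

theorem integrable_intervalIntegral_of_abs_le (hf : Measurable (Function.uncurry f))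
    (hM : ∀ r ∈ Set.uIoc a b, ∀ ω, |f r ω| ≤ M) :
    Integrable (fun ω => ∫ r in a..b, f r ω) μ := by
  simp_rw [intervalIntegral.intervalIntegral_eq_integral_uIoc]
  exact (integrable_uncurry_restrict_uIoc_prod (μ := μ) hf hM).swap.integral_prod_left.const_mul _

theorem integral_intervalIntegral_comm_of_abs_le (hf : Measurable (Function.uncurry f))
    (hM : ∀ r ∈ Set.uIoc a b, ∀ ω, |f r ω| ≤ M) :
    ∫ ω, (∫ r in a..b, f r ω) ∂μ = ∫ r in a..b, ∫ ω, f r ω ∂μ :=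
  (intervalIntegral_integral_swap (integrable_uncurry_restrict_uIoc_prod hf hM)).symm

end BoundedProcess

theorem bounded_process_eq_T_sub_s_general
    {Ω : Type*} [mΩ : MeasurableSpace Ω]
    (F : ℝ → MeasurableSpace Ω)
    (Q : Measure Ω) (hQ : IsProbabilityMeasure Q)
    (T M : ℝ)
    (α : ℝ → Ω → ℝ)
    (hjoint : Measurable fun p : ℝ × Ω => α p.1 p.2)
    (hbound : ∀ s ∈ Set.Icc (0 : ℝ) T, ∀ ω, |α s ω| ≤ M)
    (h0 : ∀ᵐ ω ∂Q, α 0 ω = T)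
    (hmart1 : ∀ a b : ℝ, 0 ≤ a → a ≤ b → b ≤ T →
      ∀ L : Set Ω, MeasurableSet[F a] L →
        ∫ ω in L, (α b ω + b) ∂Q = ∫ ω in L, (α a ω + a) ∂Q)
    (hmart2 : ∀ a b : ℝ, 0 ≤ a → a ≤ b → b ≤ T →
      ∀ L : Set Ω, MeasurableSet[F a] L →
        ∫ ω in L, (α b ω ^ 2 + 2 * ∫ r in (0 : ℝ)..b, α r ω) ∂Q
          = ∫ ω in L, (α a ω ^ 2 + 2 * ∫ r in (0 : ℝ)..a, α r ω) ∂Q) :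
    ∀ s ∈ Set.Icc (0 : ℝ) T, ∀ᵐ ω ∂Q, α s ω = T - s := by
  intro s hs
  have hL2 (r : ℝ) (hr : r ∈ Set.Icc 0 T) : MemLp (α r) 2 Q :=
    .of_bound (hjoint.comp measurable_prodMk_left).aestronglyMeasurable M
      (.of_forall (hbound r hr))
  have hmean (r : ℝ) (hr : r ∈ Set.Icc 0 T) : ∫ ω, α r ω ∂Q = T - r := by
    have h := hmart1 0 r le_rfl hr.1 hr.2 Set.univ MeasurableSet.univ
    simp only [setIntegral_univ, add_zero, integral_congr_ae h0] at h
    rw [integral_add ((hL2 r hr).integrable one_le_two) (integrable_const r)] at h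
    simpa [eq_sub_iff_add_eq] using h
  have hsub : Set.Icc 0 s ⊆ Set.Icc 0 T := Set.Icc_subset_Icc_right hs.2
  have hbound_s : ∀ r ∈ Set.uIoc 0 s, ∀ ω, |α r ω| ≤ M := fun r hr =>
    hbound r (hsub (Set.Ioc_subset_Icc_self (by rwa [Set.uIoc_of_le hs.1] at hr)))
  have hdrift : ∫ ω, (∫ r in (0 : ℝ)..s, α r ω) ∂Q = s * T - s ^ 2 / 2 := by
    rw [integral_intervalIntegral_comm_of_abs_le hjoint hbound_s,
      intervalIntegral.integral_congr (g := fun r => T - r) fun r hr =>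
        hmean r (hsub (by rwa [Set.uIcc_of_le hs.1] at hr)),
      intervalIntegral_const_sub_id]
    ring
  have hsq : ∫ ω, α s ω ^ 2 ∂Q = (T - s) ^ 2 := by
    have h := hmart2 0 s le_rfl hs.1 hs.2 Set.univ MeasurableSet.univ
    simp only [setIntegral_univ, intervalIntegral.integral_same, mul_zero, add_zero] at h
    rw [integral_add (hL2 s hs).integrable_sq
        ((integrable_intervalIntegral_of_abs_le hjoint hbound_s).const_mul 2),
      integral_const_mul, hdrift,
      integral_congr_ae (h0.mono fun ω hω => show α 0 ω ^ 2 = T ^ 2 by rw [hω])] at h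
    simp only [integral_const, probReal_univ, smul_eq_mul, one_mul] at h
    linarith
  filter_upwards [ae_eq_integral_of_integral_sq_eq_sq_integral (hL2 s hs)
    (by rw [hsq, hmean s hs])] with ω hω
  rw [hω, hmean s hs]

/-- a bounded adapted process `α` on `[0,T]` with `α_0 = T` a.s. such that
`s ↦ α_s + s` and `s ↦ α_s² + 2∫_0^s α_r dr` are martingales satisfies `α_s = T - s`
almost surely, for every `s ∈ [0,T]`. -/
theorem bounded_process_eq_T_sub_s
    {Ω : Type*} [mΩ : MeasurableSpace Ω]
    (F : ℝ → MeasurableSpace Ω) (hF_le : ∀ s, F s ≤ mΩ)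
    (hF_mono : ∀ s t, s ≤ t → F s ≤ F t)
    (Q : Measure Ω) (hQ : IsProbabilityMeasure Q)
    (T M : ℝ) (hT : 0 < T) (hM : 0 ≤ M)
    (α : ℝ → Ω → ℝ)
    (hjoint : Measurable fun p : ℝ × Ω => α p.1 p.2)
    (hadapt : ∀ s ∈ Set.Icc (0 : ℝ) T, Measurable[F s] (α s))
    (hbound : ∀ s ∈ Set.Icc (0 : ℝ) T, ∀ ω, |α s ω| ≤ M)
    (h0 : ∀ᵐ ω ∂Q, α 0 ω = T)
    (hmart1 : ∀ a b : ℝ, 0 ≤ a → a ≤ b → b ≤ T →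
      ∀ L : Set Ω, MeasurableSet[F a] L →
        ∫ ω in L, (α b ω + b) ∂Q = ∫ ω in L, (α a ω + a) ∂Q)
    (hmart2 : ∀ a b : ℝ, 0 ≤ a → a ≤ b → b ≤ T →
      ∀ L : Set Ω, MeasurableSet[F a] L →
        ∫ ω in L, (α b ω ^ 2 + 2 * ∫ r in (0 : ℝ)..b, α r ω) ∂Q
          = ∫ ω in L, (α a ω ^ 2 + 2 * ∫ r in (0 : ℝ)..a, α r ω) ∂Q) :
    ∀ s ∈ Set.Icc (0 : ℝ) T, ∀ᵐ ω ∂Q, α s ω = T - s :=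
  bounded_process_eq_T_sub_s_general (mΩ := mΩ) F Q hQ T M α hjoint hbound h0 hmart1 hmart2
end

section
/- Let (Ω, F, (F_s)_{s ∈ [0,T]}, Q) be a filtered probability space, let T > 0 and M ≥ 0, and let α : [0,T] × Ω → ℝ be a jointly measurable process, adapted to (F_s), with |α_s(ω)| ≤ M for all (s, ω). Assume that α_0 = T almost surely, that the process s ↦ α_s + s is a martingale, and that the process s ↦ α_s² + 2∫_0^s α_r dr is a martingale. Then for every s ∈ [0, T], the first and second moments of α_s are E^Q[α_s] = T − s and E^Q[α_s²] = (T − s)². -/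
open MeasureTheory Filter
open scoped Topology

/-!
Taking `L = Ω` and `a = 0` in the first martingale identity gives `E[α_s] = T - s`. In the
second one, Fubini turns `E[∫_0^s α_r dr]` into `∫_0^s (T - r) dr = T s - s² / 2`, so that
`E[α_s²] = T² - 2 (T s - s² / 2) = (T - s)²`.
-/

section

variable {Ω : Type*} [MeasurableSpace Ω] {Q : Measure Ω} [IsFiniteMeasure Q]

lemma integrable_of_abs_le {f : Ω → ℝ} {M : ℝ} (hf : Measurable f) (hM : ∀ ω, |f ω| ≤ M) :
    Integrable f Q :=
  .of_bound hf.aestronglyMeasurable M (.of_forall hM)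

lemma integrable_sq_of_abs_le {f : Ω → ℝ} {M : ℝ} (hf : Measurable f) (hM : ∀ ω, |f ω| ≤ M) :
    Integrable (fun ω => f ω ^ 2) Q :=
  integrable_of_abs_le (hf.pow_const 2) fun ω => by
    rw [abs_pow]; exact pow_le_pow_left₀ (abs_nonneg _) (hM ω) 2

variable {α : ℝ → Ω → ℝ} {a b M : ℝ}

lemma integrable_uncurry_restrict_uIoc (hα : Measurable (Function.uncurry α))
    (hbound : ∀ r ∈ Set.uIoc a b, ∀ ω, |α r ω| ≤ M) :
    Integrable (Function.uncurry α) ((volume.restrict (Set.uIoc a b)).prod Q) := by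
  have : IsFiniteMeasure (volume.restrict (Set.uIoc a b)) := Real.isFiniteMeasure_restrict_Ioc _ _
  refine .of_bound hα.aestronglyMeasurable M ?_
  have hmem : ∀ᵐ p ∂(volume.restrict (Set.uIoc a b)).prod Q, p.1 ∈ Set.uIoc a b :=
    Measure.quasiMeasurePreserving_fst.ae (ae_restrict_mem measurableSet_uIoc)
  filter_upwards [hmem] with p hp using hbound p.1 hp p.2

lemma integrable_intervalIntegral (hα : Measurable (Function.uncurry α))
    (hbound : ∀ r ∈ Set.uIoc a b, ∀ ω, |α r ω| ≤ M) :
    Integrable (fun ω => ∫ r in a..b, α r ω) Q := by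
  simp_rw [intervalIntegral.intervalIntegral_eq_integral_uIoc, smul_eq_mul]
  exact ((integrable_uncurry_restrict_uIoc hα hbound).integral_prod_right).const_mul _

end

theorem moments_of_time_component_general
    {Ω : Type*} [mΩ : MeasurableSpace Ω]
    (F : ℝ → MeasurableSpace Ω)
    (Q : Measure Ω) (hQ : IsProbabilityMeasure Q)
    (T M : ℝ)
    (α : ℝ → Ω → ℝ)
    (hjoint : Measurable fun p : ℝ × Ω => α p.1 p.2)
    (hbound : ∀ s ∈ Set.Icc (0 : ℝ) T, ∀ ω, |α s ω| ≤ M)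
    (h0 : ∀ᵐ ω ∂Q, α 0 ω = T)
    (hmart1 : ∀ a b : ℝ, 0 ≤ a → a ≤ b → b ≤ T →
      ∀ L : Set Ω, MeasurableSet[F a] L →
        ∫ ω in L, (α b ω + b) ∂Q = ∫ ω in L, (α a ω + a) ∂Q)
    (hmart2 : ∀ a b : ℝ, 0 ≤ a → a ≤ b → b ≤ T →
      ∀ L : Set Ω, MeasurableSet[F a] L →
        ∫ ω in L, (α b ω ^ 2 + 2 * ∫ r in (0 : ℝ)..b, α r ω) ∂Q
          = ∫ ω in L, (α a ω ^ 2 + 2 * ∫ r in (0 : ℝ)..a, α r ω) ∂Q) :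
    ∀ s ∈ Set.Icc (0 : ℝ) T,
      (∫ ω, α s ω ∂Q = T - s) ∧ (∫ ω, α s ω ^ 2 ∂Q = (T - s) ^ 2) := by
  intro s hs
  have hzero : (0 : ℝ) ∈ Set.Icc 0 T := ⟨le_rfl, hs.1.trans hs.2⟩
  have hmeas : ∀ r, Measurable (α r) := fun _ => hjoint.comp measurable_prodMk_left
  have hint : ∀ r ∈ Set.Icc 0 T, Integrable (α r) Q := fun r hr =>
    integrable_of_abs_le (hmeas r) (hbound r hr)
  have mean : ∀ r ∈ Set.Icc 0 T, ∫ ω, α r ω ∂Q = T - r := fun r hr => by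
    have h := hmart1 0 r le_rfl hr.1 hr.2 Set.univ .univ
    rw [setIntegral_univ, setIntegral_univ, integral_add (hint r hr) (integrable_const r),
      integral_add (hint 0 hzero) (integrable_const 0), integral_congr_ae h0] at h
    simp only [integral_const, probReal_univ, one_smul] at h
    linarith
  refine ⟨mean s hs, ?_⟩
  have hsub : Set.uIcc 0 s ⊆ Set.Icc 0 T := Set.uIcc_subset_Icc hzero hs
  have hbound' : ∀ r ∈ Set.uIoc 0 s, ∀ ω, |α r ω| ≤ M := fun r hr =>
    hbound r (hsub (Set.uIoc_subset_uIcc hr))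
  have hfubini : ∫ ω, (∫ r in (0 : ℝ)..s, α r ω) ∂Q = T * s - s ^ 2 / 2 := by
    rw [← intervalIntegral_integral_swap (integrable_uncurry_restrict_uIoc hjoint hbound'),
      intervalIntegral.integral_congr fun r hr => mean r (hsub hr),
      intervalIntegral.integral_sub intervalIntegrable_const
      intervalIntegral.intervalIntegrable_id, _root_.integral_id, intervalIntegral.integral_const]
    simp only [smul_eq_mul]
    ring
  have h := hmart2 0 s le_rfl hs.1 hs.2 Set.univ .univ
  rw [setIntegral_univ, setIntegral_univ,
    integral_add (integrable_sq_of_abs_le (hmeas s) (hbound s hs))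
      ((integrable_intervalIntegral hjoint hbound').const_mul 2),
    integral_const_mul, hfubini] at h
  simp only [intervalIntegral.integral_same, mul_zero, add_zero] at h
  rw [integral_congr_ae (h0.mono fun ω hω => congrArg (· ^ 2) hω)] at h
  simp only [integral_const, probReal_univ, one_smul] at h
  linarith

/-- a bounded adapted process `α` on `[0,T]` with `α_0 = T` a.s. such that
`s ↦ α_s + s` and `s ↦ α_s² + 2∫_0^s α_r dr` are martingales has first moment `T - s`
and second moment `(T - s)²` at every time `s ∈ [0,T]`. -/
theorem moments_of_time_component
    {Ω : Type*} [mΩ : MeasurableSpace Ω]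
    (F : ℝ → MeasurableSpace Ω) (hF_le : ∀ s, F s ≤ mΩ)
    (hF_mono : ∀ s t, s ≤ t → F s ≤ F t)
    (Q : Measure Ω) (hQ : IsProbabilityMeasure Q)
    (T M : ℝ) (hT : 0 < T) (hM : 0 ≤ M)
    (α : ℝ → Ω → ℝ)
    (hjoint : Measurable fun p : ℝ × Ω => α p.1 p.2)
    (hadapt : ∀ s ∈ Set.Icc (0 : ℝ) T, Measurable[F s] (α s))
    (hbound : ∀ s ∈ Set.Icc (0 : ℝ) T, ∀ ω, |α s ω| ≤ M)
    (h0 : ∀ᵐ ω ∂Q, α 0 ω = T)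
    (hmart1 : ∀ a b : ℝ, 0 ≤ a → a ≤ b → b ≤ T →
      ∀ L : Set Ω, MeasurableSet[F a] L →
        ∫ ω in L, (α b ω + b) ∂Q = ∫ ω in L, (α a ω + a) ∂Q)
    (hmart2 : ∀ a b : ℝ, 0 ≤ a → a ≤ b → b ≤ T →
      ∀ L : Set Ω, MeasurableSet[F a] L →
        ∫ ω in L, (α b ω ^ 2 + 2 * ∫ r in (0 : ℝ)..b, α r ω) ∂Q
          = ∫ ω in L, (α a ω ^ 2 + 2 * ∫ r in (0 : ℝ)..a, α r ω) ∂Q) :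
    ∀ s ∈ Set.Icc (0 : ℝ) T,
      (∫ ω, α s ω ∂Q = T - s) ∧ (∫ ω, α s ω ^ 2 ∂Q = (T - s) ^ 2) :=
  moments_of_time_component_general (mΩ := mΩ) F Q hQ T M α hjoint hbound h0 hmart1 hmart2
end

section
/- Let (Ω, F, (F_s)_{s ≥ 0}, P) be a filtered probability space, let C ≥ 0 and M ≥ 0 be constants, let Z : [0,∞) × Ω → ℝ be a jointly measurable adapted process with 0 ≤ Z_s(ω) ≤ M for all (s, ω) and Z_0 = 0 almost surely, and let A : [0,∞) × Ω → ℝ be a jointly measurable adapted process with |A_s(ω)| ≤ M and A_s(ω) ≤ C·Z_s(ω) for all (s, ω). Assume that the process s ↦ Z_s − ∫_0^s A_r dr is a martingale with respect to (F_s) and P. Then for every s ≥ 0, Z_s = 0 almost surely. (Gronwall-type vanishing argument: m(s) = E[Z_s] satisfies m(s) ≤ C ∫_0^s m(r) dr, hence m ≡ 0.) -/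
open MeasureTheory Filter
open scoped Topology

/-- Gronwall-type vanishing: if `Z` is a bounded nonnegative adapted process
with `Z_0 = 0` a.s., `A` is a bounded adapted process with `A_s ≤ C·Z_s`, and
`s ↦ Z_s - ∫_0^s A_r dr` is a martingale, then `Z_s = 0` a.s. for every `s ≥ 0`. -/
theorem gronwall_vanishing_of_martingale
    {Ω : Type*} [mΩ : MeasurableSpace Ω]
    (F : ℝ → MeasurableSpace Ω) (hF_le : ∀ s, F s ≤ mΩ) (hF_mono : Monotone F)
    (P : Measure Ω) (hP : IsProbabilityMeasure P)
    (C M : ℝ) (hC : 0 ≤ C) (hM : 0 ≤ M)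
    (Z A : ℝ → Ω → ℝ)
    (hZjoint : Measurable fun p : ℝ × Ω => Z p.1 p.2)
    (hZadapt : ∀ s : ℝ, 0 ≤ s → Measurable[F s] (Z s))
    (hZbdd : ∀ s ω, 0 ≤ Z s ω ∧ Z s ω ≤ M)
    (hZ0 : ∀ᵐ ω ∂P, Z 0 ω = 0)
    (hAjoint : Measurable fun p : ℝ × Ω => A p.1 p.2)
    (hAadapt : ∀ s : ℝ, 0 ≤ s → Measurable[F s] (A s))
    (hAbdd : ∀ s ω, |A s ω| ≤ M)
    (hAle : ∀ s ω, A s ω ≤ C * Z s ω)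
    (hmart : ∀ a b : ℝ, 0 ≤ a → a ≤ b →
      ∀ L : Set Ω, MeasurableSet[F a] L →
        ∫ ω in L, (Z b ω - ∫ r in (0 : ℝ)..b, A r ω) ∂P
          = ∫ ω in L, (Z a ω - ∫ r in (0 : ℝ)..a, A r ω) ∂P) :
    ∀ s : ℝ, 0 ≤ s → ∀ᵐ ω ∂P, Z s ω = 0 := by

  classical
  -- basic measurability and integrability facts
  have hZmeas : ∀ t, Measurable (Z t) := fun t =>
    hZjoint.comp (measurable_const.prodMk measurable_id)
  have hAmeas : ∀ t, Measurable (A t) := fun t =>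
    hAjoint.comp (measurable_const.prodMk measurable_id)
  have hZabs : ∀ t ω, |Z t ω| ≤ M := fun t ω =>
    abs_le.mpr ⟨by linarith [(hZbdd t ω).1, (hZbdd t ω).2], (hZbdd t ω).2⟩
  have hZint : ∀ t, Integrable (Z t) P := fun t =>
    (integrable_const M).mono' (hZmeas t).aestronglyMeasurable
      (Filter.Eventually.of_forall fun ω => by simpa using hZabs t ω)
  have hAint : ∀ t, Integrable (A t) P := fun t =>
    (integrable_const M).mono' (hAmeas t).aestronglyMeasurable
      (Filter.Eventually.of_forall fun ω => by simpa using hAbdd t ω)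
  set m : ℝ → ℝ := fun t => ∫ ω, Z t ω ∂P with hm_def
  have hm_nonneg : ∀ t, 0 ≤ m t := fun t => integral_nonneg fun ω => (hZbdd t ω).1
  have hm_le : ∀ t, m t ≤ M := fun t => by
    calc m t ≤ ∫ _, M ∂P :=
          integral_mono (hZint t) (integrable_const M) (fun ω => (hZbdd t ω).2)
      _ = M := by simp
  have hm_sm : StronglyMeasurable m :=
    hZjoint.stronglyMeasurable.integral_prod_right'
  have hm_abs : ∀ t, |m t| ≤ M := fun t =>
    abs_le.mpr ⟨by linarith [hm_nonneg t, hm_le t], hm_le t⟩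
  have hm_int : ∀ t : ℝ, IntegrableOn m (Set.Ioc 0 t) := by
    intro t
    haveI : IsFiniteMeasure ((volume : Measure ℝ).restrict (Set.Ioc 0 t)) :=
      ⟨by simp [Real.volume_Ioc]⟩
    exact (integrable_const M).mono' hm_sm.aestronglyMeasurable.restrict
      (Filter.Eventually.of_forall fun r => by simpa using hm_abs r)
  -- inner integral of A
  have hInner_sm : StronglyMeasurable (fun r => ∫ ω, A r ω ∂P) :=
    hAjoint.stronglyMeasurable.integral_prod_right'
  have hInner_abs : ∀ r, |∫ ω, A r ω ∂P| ≤ M := by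
    intro r
    have := norm_integral_le_of_norm_le_const
      (C := M) (μ := P) (f := A r)
      (Filter.Eventually.of_forall fun ω => by simpa using hAbdd r ω)
    simpa using this
  have hInner_int : ∀ t : ℝ, IntegrableOn (fun r => ∫ ω, A r ω ∂P) (Set.Ioc 0 t) := by
    intro t
    haveI : IsFiniteMeasure ((volume : Measure ℝ).restrict (Set.Ioc 0 t)) :=
      ⟨by simp [Real.volume_Ioc]⟩
    exact (integrable_const M).mono' hInner_sm.aestronglyMeasurable.restrict
      (Filter.Eventually.of_forall fun r => by simpa using hInner_abs r)
  have hInner_le : ∀ r, (∫ ω, A r ω ∂P) ≤ C * m r := fun r => by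
    calc ∫ ω, A r ω ∂P ≤ ∫ ω, C * Z r ω ∂P :=
          integral_mono (hAint r) ((hZint r).const_mul C) (hAle r)
      _ = C * m r := integral_const_mul _ _
  -- key identity from the martingale property
  have key : ∀ t : ℝ, 0 ≤ t → m t = ∫ r in Set.Ioc (0:ℝ) t, (∫ ω, A r ω ∂P) := by
    intro t ht
    haveI : IsFiniteMeasure ((volume : Measure ℝ).restrict (Set.Ioc 0 t)) :=
      ⟨by simp [Real.volume_Ioc]⟩
    have hprod : Integrable (fun p : Ω × ℝ => A p.2 p.1)
        (P.prod ((volume : Measure ℝ).restrict (Set.Ioc 0 t))) := by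
      refine (integrable_const M).mono'
        ((hAjoint.comp measurable_swap).aestronglyMeasurable)
        (Filter.Eventually.of_forall fun p => by simpa using hAbdd p.2 p.1)
    have hg_int : Integrable (fun ω => ∫ r in Set.Ioc (0:ℝ) t, A r ω) P :=
      hprod.integral_prod_left
    have hswap :
        (∫ ω, (∫ r in Set.Ioc (0:ℝ) t, A r ω) ∂P)
          = ∫ r in Set.Ioc (0:ℝ) t, (∫ ω, A r ω ∂P) :=
      integral_integral_swap hprod
    have hmart0 := hmart 0 t le_rfl ht Set.univ MeasurableSet.univ
    simp only [Measure.restrict_univ, intervalIntegral.integral_same, sub_zero] at hmart0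
    have hZ0eq : (∫ ω, Z 0 ω ∂P) = 0 := by
      have : (∫ ω, Z 0 ω ∂P) = ∫ ω, (0:ℝ) ∂P :=
        integral_congr_ae (by filter_upwards [hZ0] with ω h using h)
      simpa using this
    have hivl : ∀ ω, (∫ r in (0:ℝ)..t, A r ω) = ∫ r in Set.Ioc (0:ℝ) t, A r ω := by
      intro ω
      rw [intervalIntegral.integral_of_le ht]
    have hmart1 :
        (∫ ω, (Z t ω - ∫ r in Set.Ioc (0:ℝ) t, A r ω) ∂P) = 0 := by
      rw [show (fun ω => Z t ω - ∫ r in Set.Ioc (0:ℝ) t, A r ω)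
            = fun ω => Z t ω - ∫ r in (0:ℝ)..t, A r ω from by
          funext ω; rw [hivl ω]]
      rw [hmart0, hZ0eq]
    rw [integral_sub (hZint t) hg_int, sub_eq_zero] at hmart1
    rw [hm_def]
    simpa [hswap] using hmart1
  -- Gronwall inequality
  have main : ∀ t : ℝ, 0 ≤ t → m t ≤ C * ∫ r in Set.Ioc (0:ℝ) t, m r := by
    intro t ht
    rw [key t ht, ← integral_const_mul]
    exact setIntegral_mono_on (hInner_int t) ((hm_int t).const_mul C)
      measurableSet_Ioc (fun r _ => hInner_le r)
  have bound : ∀ n : ℕ, ∀ t : ℝ, 0 ≤ t → m t ≤ M * (C * t) ^ n / n.factorial := by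
    intro n
    induction n with
    | zero => intro t ht; simpa using hm_le t
    | succ n ih =>
      intro t ht
      have hcont : Continuous (fun r : ℝ => M * (C * r) ^ n / (n.factorial : ℝ)) := by
        continuity
      have h2 : (∫ r in Set.Ioc (0:ℝ) t, m r)
          ≤ ∫ r in Set.Ioc (0:ℝ) t, (M * (C * r) ^ n / (n.factorial : ℝ)) := by
        refine setIntegral_mono_on (hm_int t) ?_ measurableSet_Ioc
          (fun r hr => ih r (le_of_lt hr.1))
        exact hcont.integrableOn_Ioc
      have h3 : (∫ r in Set.Ioc (0:ℝ) t, (M * (C * r) ^ n / (n.factorial : ℝ)))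
          = (M * C ^ n / (n.factorial : ℝ)) * (t ^ (n + 1) / (n + 1)) := by
        rw [← intervalIntegral.integral_of_le ht]
        have : (fun r : ℝ => M * (C * r) ^ n / (n.factorial : ℝ))
            = fun r : ℝ => (M * C ^ n / (n.factorial : ℝ)) * r ^ n := by
          funext r; rw [mul_pow]; ring
        rw [this, intervalIntegral.integral_const_mul, integral_pow]
        simp [mul_div_assoc]
      have h4 : m t ≤ C * ((M * C ^ n / (n.factorial : ℝ)) * (t ^ (n + 1) / (n + 1))) := by
        calc m t ≤ C * ∫ r in Set.Ioc (0:ℝ) t, m r := main t ht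
          _ ≤ C * ((M * C ^ n / (n.factorial : ℝ)) * (t ^ (n + 1) / (n + 1))) := by
              rw [← h3]; exact mul_le_mul_of_nonneg_left h2 hC
      have heq : C * ((M * C ^ n / (n.factorial : ℝ)) * (t ^ (n + 1) / (n + 1)))
          = M * (C * t) ^ (n + 1) / ((n + 1).factorial : ℝ) := by
        have hfac : ((n + 1).factorial : ℝ) = (n + 1) * (n.factorial : ℝ) := by
          push_cast [Nat.factorial_succ]; ring
        have hfac_pos : (0:ℝ) < (n.factorial : ℝ) := by positivity
        have hn1 : (0:ℝ) < (n:ℝ) + 1 := by positivity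
        rw [hfac, mul_pow]
        field_simp
        ring
      rw [heq] at h4
      exact h4
  intro s hs
  have hzero : m s = 0 := by
    have htend : Tendsto (fun n : ℕ => M * (C * s) ^ n / n.factorial) atTop (𝓝 0) := by
      have h := (FloorSemiring.tendsto_pow_div_factorial_atTop (C * s)).const_mul M
      simpa [mul_div_assoc] using h
    have hle : m s ≤ 0 := ge_of_tendsto' htend (fun n => bound n s hs)
    linarith [hm_nonneg s]
  have hae := (integral_eq_zero_iff_of_nonneg (fun ω => (hZbdd s ω).1) (hZint s)).mp hzero
  filter_upwards [hae] with ω hω using hω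
end
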